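/- Let G be a simple graph on a finite type V, let s : V, and define d₀ : V → ℕ∞ by d₀ s = 0 and d₀ v = ⊤ for v ≠ s. Define the synchronous Bellman–Ford update F : (V → ℕ∞) → (V → ℕ∞) by F d v = min (d v) ((⨅ u ∈ G.neighborSet v, d u) + 1). Then for every v : V, F^[Fintype.card V - 1] d₀ v = G.edist s v. -/

import Mathlib

/-!
Each round can only lower an estimate, and along a walk from `v` to `u` of length `ℓ` it pushes
`d u + ℓ` back to `v` in `ℓ` rounds; starting from `d₀ s = 0`, a shortest walk from `v` to `s`
gives the upper bound `G.edist s v` once `G.edist s v ≤ k`. Conversely the lower bound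
`G.edist s ≤ d` survives every round by the triangle inequality. A reachable vertex is joined to
`s` by a path, which has at most `Fintype.card V - 1` edges.
-/

namespace SimpleGraph

variable {V : Type*} (G : SimpleGraph V)

noncomputable def bellmanFordStep (d : V → ℕ∞) (v : V) : ℕ∞ :=
  min (d v) ((⨅ u ∈ G.neighborSet v, d u) + 1)

variable {G}

lemma bellmanFordStep_le (d : V → ℕ∞) : G.bellmanFordStep d ≤ d :=
  fun _ ↦ min_le_left _ _

lemma bellmanFordStep_le_of_adj (d : V → ℕ∞) {v w : V} (h : G.Adj v w) :
    G.bellmanFordStep d v ≤ d w + 1 :=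
  (min_le_right _ _).trans (by gcongr; exact biInf_le _ h)

lemma iterate_bellmanFordStep_length_le {v u : V} (p : G.Walk v u) (d : V → ℕ∞) :
    (G.bellmanFordStep)^[p.length] d v ≤ d u + p.length := by
  induction p with
  | nil => simp
  | @cons v w u h q ih =>
    calc (G.bellmanFordStep)^[q.length + 1] d v
        = G.bellmanFordStep ((G.bellmanFordStep)^[q.length] d) v :=
          congrFun (Function.iterate_succ_apply' ..) v
      _ ≤ (G.bellmanFordStep)^[q.length] d w + 1 := bellmanFordStep_le_of_adj _ h
      _ ≤ d u + q.length + 1 := by gcongr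
      _ = d u + (q.cons h).length := by push_cast [Walk.length_cons]; ring

lemma iterate_bellmanFordStep_le_edist {s v : V} {d : V → ℕ∞} (hs : d s = 0) {k : ℕ}
    (hk : G.edist s v ≤ k) : (G.bellmanFordStep)^[k] d v ≤ G.edist s v := by
  obtain ⟨m, hm⟩ := ENat.ne_top_iff_exists.mp (ne_top_of_le_ne_top (ENat.natCast_ne_top k) hk)
  obtain ⟨p, hp⟩ := exists_walk_of_edist_eq_coe (edist_comm ▸ hm.symm : G.edist v s = m)
  have hpk : p.length ≤ k := by rw [hp]; exact_mod_cast hm ▸ hk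
  calc (G.bellmanFordStep)^[k] d v
      ≤ (G.bellmanFordStep)^[p.length] d v :=
        Function.antitone_iterate_of_le_id bellmanFordStep_le hpk d v
    _ ≤ d s + p.length := iterate_bellmanFordStep_length_le p d
    _ = G.edist s v := by rw [hs, zero_add, hp, hm]

lemma edist_le_bellmanFordStep {s : V} {d : V → ℕ∞} (h : ∀ u, G.edist s u ≤ d u) (v : V) :
    G.edist s v ≤ G.bellmanFordStep d v := by
  refine le_min (h v) ?_
  simp only [ENat.iInf_add]
  exact le_iInf₂ fun u hu ↦ SimpleGraph.edist_triangle.trans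
    (add_le_add (h u) (edist_eq_one_iff_adj.mpr (G.adj_symm hu)).le)

lemma edist_le_iterate_bellmanFordStep {s : V} {d : V → ℕ∞} (h : ∀ u, G.edist s u ≤ d u)
    (k : ℕ) (v : V) : G.edist s v ≤ (G.bellmanFordStep)^[k] d v := by
  induction k generalizing v with
  | zero => exact h v
  | succ k ih =>
    rw [Function.iterate_succ_apply']
    exact edist_le_bellmanFordStep ih v

lemma edist_le_card_sub_one [Fintype V] {u v : V} (h : G.edist u v ≠ ⊤) :
    G.edist u v ≤ (Fintype.card V - 1 : ℕ) := by
  classical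
  obtain ⟨p, -⟩ := exists_walk_of_edist_ne_top h
  have := p.toPath.2.length_lt
  exact (edist_le p.toPath.1).trans (by exact_mod_cast (by omega : _ ≤ Fintype.card V - 1))

end SimpleGraph

theorem bellman_ford_converges_in_card_sub_one_general {V : Type*} [Fintype V]
    (G : SimpleGraph V) (s : V)
    (d₀ : V → ℕ∞) (hd₀s : d₀ s = 0) (hd₀ : ∀ v, v ≠ s → d₀ v = ⊤)
    (F : (V → ℕ∞) → (V → ℕ∞))
    (hF : ∀ d v, F d v = min (d v) ((⨅ u ∈ G.neighborSet v, d u) + 1)) :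
    ∀ v : V, F^[Fintype.card V - 1] d₀ v = G.edist s v := by
  obtain rfl : F = G.bellmanFordStep := funext fun d ↦ funext (hF d)
  have hlow : ∀ u, G.edist s u ≤ d₀ u := fun u ↦ by
    by_cases hu : u = s
    · simp [hu]
    · simp [hd₀ u hu]
  intro v
  refine le_antisymm ?_ (SimpleGraph.edist_le_iterate_bellmanFordStep hlow _ v)
  by_cases hv : G.edist s v = ⊤
  · exact hv ▸ le_top
  · exact SimpleGraph.iterate_bellmanFordStep_le_edist hd₀s
      (SimpleGraph.edist_le_card_sub_one hv)

theorem bellman_ford_converges_in_card_sub_one {V : Type*} [Fintype V] [DecidableEq V]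
    (G : SimpleGraph V) (s : V)
    (d₀ : V → ℕ∞) (hd₀s : d₀ s = 0) (hd₀ : ∀ v, v ≠ s → d₀ v = ⊤)
    (F : (V → ℕ∞) → (V → ℕ∞))
    (hF : ∀ d v, F d v = min (d v) ((⨅ u ∈ G.neighborSet v, d u) + 1)) :
    ∀ v : V, F^[Fintype.card V - 1] d₀ v = G.edist s v :=
  bellman_ford_converges_in_card_sub_one_general G s d₀ hd₀s hd₀ F hF
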